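/- Let b, c, x₃ be complex numbers with bc ≠ 0. The 9×9 matrix given in block form [1], [[1,0],[0,1]], [[1−bc, 0, b/c],[−x₃c², 1, x₃],[c², 0, 0]], [[1−bc, b],[c, 0]], [1] satisfies the braid relation R̂₁R̂₂R̂₁ = R̂₂R̂₁R̂₂, and its characteristic polynomial is (t−1)⁷(t+bc)². -/

import Mathlib

open Matrix Polynomial

noncomputable section

/-- `R̂ ⊗ 1` acting on `V ⊗ V ⊗ V` with `V = ℂ^3`. -/
def R1 (R : Matrix (Fin 3 × Fin 3) (Fin 3 × Fin 3) ℂ) :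
    Matrix (Fin 3 × Fin 3 × Fin 3) (Fin 3 × Fin 3 × Fin 3) ℂ :=
  fun p q => R (p.1, p.2.1) (q.1, q.2.1) * (if p.2.2 = q.2.2 then 1 else 0)

/-- `1 ⊗ R̂` acting on `V ⊗ V ⊗ V` with `V = ℂ^3`. -/
def R2 (R : Matrix (Fin 3 × Fin 3) (Fin 3 × Fin 3) ℂ) :
    Matrix (Fin 3 × Fin 3 × Fin 3) (Fin 3 × Fin 3 × Fin 3) ℂ :=
  fun p q => (if p.1 = q.1 then 1 else 0) * R (p.2.1, p.2.2) (q.2.1, q.2.2)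

/-- The braid relation `R̂₁R̂₂R̂₁ = R̂₂R̂₁R̂₂`. -/
def Braid (R : Matrix (Fin 3 × Fin 3) (Fin 3 × Fin 3) ℂ) : Prop :=
  R1 R * R2 R * R1 R = R2 R * R1 R * R2 R

/-- position within the charge-1 sector: |10⟩, |01⟩. -/
def f1 (p : Fin 3 × Fin 3) : Fin 2 := if p = (1, 0) then 0 else 1

/-- position within the charge-2 sector: |20⟩, |11⟩, |02⟩. -/
def f2 (p : Fin 3 × Fin 3) : Fin 3 := if p = (2, 0) then 0 else if p = (1, 1) then 1 else 2

/-- position within the charge-3 sector: |21⟩, |12⟩. -/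
def f3 (p : Fin 3 × Fin 3) : Fin 2 := if p = (2, 1) then 0 else 1

/-- The 9×9 matrix with blocks of sizes 1,2,3,2,1 on the graded basis
|00⟩,|10⟩,|01⟩,|20⟩,|11⟩,|02⟩,|21⟩,|12⟩,|22⟩. -/
def blockR (b0 : ℂ) (B1 : Matrix (Fin 2) (Fin 2) ℂ) (B2 : Matrix (Fin 3) (Fin 3) ℂ)
    (B3 : Matrix (Fin 2) (Fin 2) ℂ) (b4 : ℂ) : Matrix (Fin 3 × Fin 3) (Fin 3 × Fin 3) ℂ :=
  fun p q =>
    if (p.1 : ℕ) + (p.2 : ℕ) ≠ (q.1 : ℕ) + (q.2 : ℕ) then 0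
    else if (p.1 : ℕ) + (p.2 : ℕ) = 0 then b0
    else if (p.1 : ℕ) + (p.2 : ℕ) = 1 then B1 (f1 p) (f1 q)
    else if (p.1 : ℕ) + (p.2 : ℕ) = 2 then B2 (f2 p) (f2 q)
    else if (p.1 : ℕ) + (p.2 : ℕ) = 3 then B3 (f3 p) (f3 q)
    else b4

/-!
The matrix conserves the charge `i + j` of a basis vector `|ij⟩`, so both sides of the braid
relation vanish between basis vectors `|ijk⟩`, `|lmn⟩` of different total charge. Writing
`b = g c`, the remaining entries are polynomial identities in `g`, `c`, `x₃`. Ordering the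
basis by charge makes the matrix block diagonal, so its characteristic polynomial is the
product of those of its blocks, `(t-1)`, `(t-1)²`, `(t-1)²(t+bc)`, `(t-1)(t+bc)` and `(t-1)`.
-/

def charge (p : Fin 3 × Fin 3) : ℕ := (p.1 : ℕ) + p.2

def ConservesCharge (R : Matrix (Fin 3 × Fin 3) (Fin 3 × Fin 3) ℂ) : Prop :=
  ∀ p q, charge p ≠ charge q → R p q = 0

lemma blockR_conservesCharge (b0 : ℂ) (B1 : Matrix (Fin 2) (Fin 2) ℂ)
    (B2 : Matrix (Fin 3) (Fin 3) ℂ) (B3 : Matrix (Fin 2) (Fin 2) ℂ) (b4 : ℂ) :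
    ConservesCharge (blockR b0 B1 B2 B3 b4) :=
  fun _ _ h => if_pos h

section BraidEntries

variable (R : Matrix (Fin 3 × Fin 3) (Fin 3 × Fin 3) ℂ) (i j k l m n : Fin 3)

lemma R1_mul_R2_mul_R1_apply :
    (R1 R * R2 R * R1 R) (i, j, k) (l, m, n) =
      ∑ a, ∑ e, ∑ b, R (i, j) (a, b) * R (b, k) (e, n) * R (a, e) (l, m) := by
  simp [Matrix.mul_apply, R1, R2, Fintype.sum_prod_type, mul_ite, ite_mul, Finset.sum_mul]

lemma R2_mul_R1_mul_R2_apply :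
    (R2 R * R1 R * R2 R) (i, j, k) (l, m, n) =
      ∑ a, ∑ e, ∑ b, R (j, k) (b, e) * R (i, b) (l, a) * R (a, e) (m, n) := by
  simp [Matrix.mul_apply, R1, R2, Fintype.sum_prod_type, mul_ite, ite_mul, Finset.sum_mul]

variable {R i j k l m n}

lemma R1_mul_R2_mul_R1_apply_eq_zero (hR : ConservesCharge R)
    (h : (i : ℕ) + j + k ≠ (l : ℕ) + m + n) : (R1 R * R2 R * R1 R) (i, j, k) (l, m, n) = 0 := by
  rw [R1_mul_R2_mul_R1_apply]
  refine Finset.sum_eq_zero fun a _ => Finset.sum_eq_zero fun e _ =>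
    Finset.sum_eq_zero fun b _ => ?_
  by_cases h₁ : charge (i, j) = charge (a, b)
  · by_cases h₂ : charge (b, k) = charge (e, n)
    · rw [hR (a, e) (l, m) (by simp only [charge] at *; omega), mul_zero]
    · rw [hR _ _ h₂, mul_zero, zero_mul]
  · rw [hR _ _ h₁, zero_mul, zero_mul]

lemma R2_mul_R1_mul_R2_apply_eq_zero (hR : ConservesCharge R)
    (h : (i : ℕ) + j + k ≠ (l : ℕ) + m + n) : (R2 R * R1 R * R2 R) (i, j, k) (l, m, n) = 0 := by
  rw [R2_mul_R1_mul_R2_apply]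
  refine Finset.sum_eq_zero fun a _ => Finset.sum_eq_zero fun e _ =>
    Finset.sum_eq_zero fun b _ => ?_
  by_cases h₁ : charge (j, k) = charge (b, e)
  · by_cases h₂ : charge (i, b) = charge (l, a)
    · rw [hR (a, e) (m, n) (by simp only [charge] at *; omega), mul_zero]
    · rw [hR _ _ h₂, mul_zero, zero_mul]
  · rw [hR _ _ h₁, zero_mul, zero_mul]

end BraidEntries

/-- Solution 5.2.1 with `b = g * c`, so that `b / c = g` and every entry is a polynomial. -/
def sol521Matrix (g c x3 : ℂ) : Matrix (Fin 3 × Fin 3) (Fin 3 × Fin 3) ℂ :=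
  blockR 1 1 !![1 - g * c * c, 0, g; -x3 * c ^ 2, 1, x3; c ^ 2, 0, 0]
    !![1 - g * c * c, g * c; c, 0] 1

def sol521Entry (g c x3 : ℂ) : Fin 3 → Fin 3 → Fin 3 → Fin 3 → ℂ :=
  ![![![![1, 0, 0], ![0, 0, 0], ![0, 0, 0]],
      ![![0, 1, 0], ![0, 0, 0], ![0, 0, 0]],
      ![![0, 0, 0], ![0, 0, 0], ![c ^ 2, 0, 0]]],
    ![![![0, 0, 0], ![1, 0, 0], ![0, 0, 0]],
      ![![0, 0, x3], ![0, 1, 0], ![-x3 * c ^ 2, 0, 0]],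
      ![![0, 0, 0], ![0, 0, 0], ![0, c, 0]]],
    ![![![0, 0, g], ![0, 0, 0], ![1 - g * c * c, 0, 0]],
      ![![0, 0, 0], ![0, 0, g * c], ![0, 1 - g * c * c, 0]],
      ![![0, 0, 0], ![0, 0, 0], ![0, 0, 1]]]]

lemma sol521Matrix_apply (g c x3 : ℂ) (i j k l : Fin 3) :
    sol521Matrix g c x3 (i, j) (k, l) = sol521Entry g c x3 i j k l := by
  fin_cases i <;> fin_cases j <;> fin_cases k <;> fin_cases l <;>
    simp [sol521Matrix, sol521Entry, blockR, f1, f2, f3]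

set_option maxHeartbeats 4000000 in
lemma braid_sol521Matrix (g c x3 : ℂ) : Braid (sol521Matrix g c x3) := by
  have hR : ConservesCharge (sol521Matrix g c x3) := blockR_conservesCharge _ _ _ _ _
  ext ⟨i, j, k⟩ ⟨l, m, n⟩
  rcases ne_or_eq ((i : ℕ) + j + k) ((l : ℕ) + m + n) with h | h
  · rw [R1_mul_R2_mul_R1_apply_eq_zero hR h, R2_mul_R1_mul_R2_apply_eq_zero hR h]
  rw [R1_mul_R2_mul_R1_apply, R2_mul_R1_mul_R2_apply]
  simp only [Fin.sum_univ_three, sol521Matrix_apply]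
  fin_cases i <;> fin_cases j <;> fin_cases k <;> fin_cases l <;> fin_cases m <;> fin_cases n <;>
    first
      | exact absurd h (by decide)
      | (simp only [Fin.reduceFinMk, sol521Entry, Matrix.cons_val]; ring)

def sectorIndex : Fin 1 ⊕ Fin 2 ⊕ Fin 3 ⊕ Fin 2 ⊕ Fin 1 → Fin 3 × Fin 3
  | .inl _ => (0, 0)
  | .inr (.inl k) => ![(1, 0), (0, 1)] k
  | .inr (.inr (.inl k)) => ![(2, 0), (1, 1), (0, 2)] k
  | .inr (.inr (.inr (.inl k))) => ![(2, 1), (1, 2)] k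
  | .inr (.inr (.inr (.inr _))) => (2, 2)

def sectorEquiv : Fin 1 ⊕ Fin 2 ⊕ Fin 3 ⊕ Fin 2 ⊕ Fin 1 ≃ Fin 3 × Fin 3 :=
  Equiv.ofBijective sectorIndex (by decide)

section Charpoly

variable (b0 : ℂ) (B1 : Matrix (Fin 2) (Fin 2) ℂ) (B2 : Matrix (Fin 3) (Fin 3) ℂ)
  (B3 : Matrix (Fin 2) (Fin 2) ℂ) (b4 : ℂ)

lemma submatrix_sectorEquiv_blockR :
    (blockR b0 B1 B2 B3 b4).submatrix sectorEquiv sectorEquiv =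
      fromBlocks (diagonal fun _ => b0) 0 0 (fromBlocks B1 0 0
        (fromBlocks B2 0 0 (fromBlocks B3 0 0 (diagonal fun _ => b4)))) := by
  ext (i | i | i | i | i) (j | j | j | j | j) <;> fin_cases i <;> fin_cases j <;>
    simp [sectorEquiv, sectorIndex, blockR, f1, f2, f3]

lemma charpoly_blockR :
    (blockR b0 B1 B2 B3 b4).charpoly =
      (X - C b0) * B1.charpoly * B2.charpoly * B3.charpoly * (X - C b4) := by
  rw [← charpoly_reindex sectorEquiv.symm, reindex_apply, Equiv.symm_symm,
    submatrix_sectorEquiv_blockR]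
  simp only [charpoly_fromBlocks_zero₁₂, charpoly_diagonal, Fin.prod_univ_one]
  ring

end Charpoly

lemma charpoly_charge2Block {K : Type*} [Field K] (b c x : K) :
    (!![1 - b * c, 0, b / c; -x * c ^ 2, 1, x; c ^ 2, 0, 0] : Matrix (Fin 3) (Fin 3) K).charpoly =
      (X - 1) ^ 2 * (X + C (b * c)) := by
  -- also for `c = 0`, where `b / c = 0`
  have key : b / c * c ^ 2 = b * c := by
    rcases eq_or_ne c 0 with rfl | hc
    · simp
    · field_simp
  have key' : C (b / c) * C c ^ 2 = C b * C c := by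
    rw [← map_pow, ← map_mul, ← map_mul, key]
  rw [charpoly, det_fin_three]
  simp only [charmatrix_apply, diagonal_apply, of_apply, cons_val', cons_val, cons_val_fin_one,
    Fin.reduceEq, if_true, if_false, map_sub, map_one, map_mul, map_neg, map_pow, map_zero]
  linear_combination (1 - X) * key'

lemma charpoly_charge3Block {R : Type*} [CommRing R] [Nontrivial R] (b c : R) :
    (!![1 - b * c, b; c, 0] : Matrix (Fin 2) (Fin 2) R).charpoly = (X - 1) * (X + C (b * c)) := by
  rw [charpoly_fin_two, trace_fin_two_of, det_fin_two_of]
  simp only [add_zero, mul_zero, zero_sub, C_sub, C_mul, C_1, C_neg]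
  ring

/-- solution 5.2.1 satisfies the braid relation and has characteristic
polynomial `(t−1)⁷(t+bc)²`. -/
theorem sol521 (b c x3 : ℂ) (hbc : b * c ≠ 0) :
    Braid (blockR 1 1
      !![1 - b * c, 0, b / c; -x3 * c ^ 2, 1, x3; c ^ 2, 0, 0]
      !![1 - b * c, b; c, 0] 1) ∧
    (blockR 1 1
      !![1 - b * c, 0, b / c; -x3 * c ^ 2, 1, x3; c ^ 2, 0, 0]
      !![1 - b * c, b; c, 0] 1).charpoly
      = (X - C 1) ^ 7 * (X + C (b * c)) ^ 2 := by
  refine ⟨?_, ?_⟩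
  · have hc : c ≠ 0 := right_ne_zero_of_mul hbc
    obtain ⟨g, rfl⟩ : ∃ g, b = g * c := ⟨b / c, (div_mul_cancel₀ b hc).symm⟩
    rw [mul_div_cancel_right₀ g hc]
    exact braid_sol521Matrix g c x3
  · rw [charpoly_blockR, charpoly_one, charpoly_charge2Block, charpoly_charge3Block,
      Fintype.card_fin, map_one]
    ring
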